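/- arXiv:2504.16598 — 9 statements merged into one kernel-verified Lean document; each statement's English description precedes it below -/
import Mathlib

section
/- Let (L,[·,·]) be a Lie algebra over a field k and R a Reynolds operator on L. Then the operation [x, y]_R := [x, R y] + [R x, y] − [R x, R y] is bilinear, alternating, and satisfies the Jacobi identity [[x,y]_R, z]_R + [[y,z]_R, x]_R + [[z,x]_R, y]_R = 0, so (L, [·,·]_R) is a Lie algebra. -/
/-- A Reynolds operator on a Lie algebra `L` over a field `k`. -/
def IsReynolds {k L : Type*} [Field k] [LieRing L] [LieAlgebra k L]
    (R : L →ₗ[k] L) : Prop :=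
  ∀ x y : L, ⁅R x, R y⁆ = R (⁅R x, y⁆ + ⁅x, R y⁆ - ⁅R x, R y⁆)

/-- The bracket `[x, y]_R := [x, R y] + [R x, y] - [R x, R y]` induced by a Reynolds
operator. -/
def brR {k L : Type*} [Field k] [LieRing L] [LieAlgebra k L]
    (R : L →ₗ[k] L) (x y : L) : L :=
  ⁅x, R y⁆ + ⁅R x, y⁆ - ⁅R x, R y⁆

/-- If `R` is a Reynolds operator on a Lie algebra `L`, then `[·,·]_R` is bilinear,
alternating and satisfies the Jacobi identity, so `(L, [·,·]_R)` is a Lie algebra. -/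
theorem brR_lieAlgebra {k L : Type*} [Field k] [LieRing L] [LieAlgebra k L]
    (R : L →ₗ[k] L) (hR : IsReynolds R) :
    (∀ x : L, IsLinearMap k (brR R x)) ∧
    (∀ y : L, IsLinearMap k fun x => brR R x y) ∧
    (∀ x : L, brR R x x = 0) ∧
    (∀ x y z : L, brR R (brR R x y) z + brR R (brR R y z) x + brR R (brR R z x) y = 0) := by
  have key : ∀ x y : L, R (⁅x, R y⁆ + ⁅R x, y⁆ - ⁅R x, R y⁆) = ⁅R x, R y⁆ := by
    intro x y
    rw [add_comm ⁅x, R y⁆ ⁅R x, y⁆]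
    exact (hR x y).symm
  have cyc : ∀ a b c : L, ⁅⁅a, b⁆, c⁆ + ⁅⁅b, c⁆, a⁆ + ⁅⁅c, a⁆, b⁆ = 0 := by
    intro a b c
    have h := lie_jacobi c a b
    rw [← lie_skew c ⁅a, b⁆, ← lie_skew a ⁅b, c⁆, ← lie_skew b ⁅c, a⁆] at h
    rw [← neg_eq_zero]
    abel_nf
    abel_nf at h
    exact h
  refine ⟨?_, ?_, ?_, ?_⟩
  · intro x
    constructor
    · intro y z
      simp only [brR, map_add, lie_add, add_lie, lie_sub, sub_lie]
      abel
    · intro c y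
      simp only [brR, map_smul, lie_smul, smul_lie, smul_add, smul_sub]
  · intro y
    constructor
    · intro a b
      simp only [brR, map_add, lie_add, add_lie, lie_sub, sub_lie]
      abel
    · intro c a
      simp only [brR, map_smul, lie_smul, smul_lie, smul_add, smul_sub]
  · intro x
    simp only [brR, lie_self, sub_zero]
    rw [← lie_skew x (R x)]
    abel
  · intro x y z
    simp only [brR, key, add_lie, sub_lie]
    have h1 := cyc x (R y) (R z)
    have h2 := cyc (R x) y (R z)
    have h3 := cyc (R x) (R y) z
    have h4 := cyc (R x) (R y) (R z)
    have total : (⁅⁅x, R y⁆, R z⁆ + ⁅⁅R y, R z⁆, x⁆ + ⁅⁅R z, x⁆, R y⁆)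
        + (⁅⁅R x, y⁆, R z⁆ + ⁅⁅y, R z⁆, R x⁆ + ⁅⁅R z, R x⁆, y⁆)
        + (⁅⁅R x, R y⁆, z⁆ + ⁅⁅R y, z⁆, R x⁆ + ⁅⁅z, R x⁆, R y⁆)
        - ((⁅⁅R x, R y⁆, R z⁆ + ⁅⁅R y, R z⁆, R x⁆ + ⁅⁅R z, R x⁆, R y⁆)
          + (⁅⁅R x, R y⁆, R z⁆ + ⁅⁅R y, R z⁆, R x⁆ + ⁅⁅R z, R x⁆, R y⁆)) = 0 := by
      rw [h1, h2, h3, h4]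
      abel
    rw [← total]
    abel
end

section
/- Let (L,[·,·]) be a Lie algebra over a field k and R a Reynolds operator on L, and let [x, y]_R := [x, R y] + [R x, y] − [R x, R y] be the induced Lie bracket. Then R is again a Reynolds operator on the Lie algebra (L, [·,·]_R), i.e. [R x, R y]_R = R([R x, y]_R + [x, R y]_R − [R x, R y]_R) for all x, y ∈ L. -/
/-- If `R` is a Reynolds operator on a Lie algebra `L`, then `R` is again a Reynolds
operator on the induced Lie algebra `(L, [·,·]_R)`. -/
theorem reynolds_on_brR {k L : Type*} [Field k] [LieRing L] [LieAlgebra k L]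
    (R : L →ₗ[k] L) (hR : IsReynolds R) :
    ∀ x y : L,
      brR R (R x) (R y) = R (brR R (R x) y + brR R x (R y) - brR R (R x) (R y)) := by
  have key : ∀ a b : L, R (brR R a b) = ⁅R a, R b⁆ := by
    intro a b
    rw [brR, show ⁅a, R b⁆ + ⁅R a, b⁆ - ⁅R a, R b⁆ = ⁅R a, b⁆ + ⁅a, R b⁆ - ⁅R a, R b⁆
      from by abel, ← hR]
  intro x y
  rw [map_sub, map_add, key, key, key, brR]
  abel
end

section
/- Let (L, R) be a Reynolds Lie algebra over a field k and (V; ρ, R_V) a representation of it. Then the vector space L ⊕ V with bracket [(x,u),(y,v)]_⋉ := ([x,y], ρ(x)v − ρ(y)u) is a Lie algebra, and the linear map (x,u) ↦ (R x, R_V u) is a Reynolds operator on (L ⊕ V, [·,·]_⋉); hence the semidirect product L ⋉ V is a Reynolds Lie algebra. -/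
namespace ReynoldsSemidirect

variable {k L V : Type*} [Field k] [LieRing L] [LieAlgebra k L]
  [AddCommGroup V] [Module k V]

/-- The semidirect product bracket on `L × V`:
`[(x,u),(y,v)] = ([x,y], ρ(x)v - ρ(y)u)`. -/
def sdBracket (ρ : L →ₗ[k] Module.End k V) (p q : L × V) : L × V :=
  (⁅p.1, q.1⁆, ρ p.1 q.2 - ρ q.1 p.2)

/-- The map `(x,u) ↦ (R x, R_V u)` on `L × V`. -/
def sdR (R : L →ₗ[k] L) (RV : V →ₗ[k] V) (p : L × V) : L × V :=
  (R p.1, RV p.2)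

/-- If `(V; ρ, R_V)` is a representation of a Reynolds Lie algebra `(L, R)`, then the
semidirect product `L ⋉ V` is a Reynolds Lie algebra: the bracket
`[(x,u),(y,v)] = ([x,y], ρ(x)v - ρ(y)u)` is bilinear, alternating and satisfies the
Jacobi identity, and `(x,u) ↦ (R x, R_V u)` is a Reynolds operator for it. -/
theorem semidirect_reynolds
    (R : L →ₗ[k] L)
    (hR : ∀ x y : L, ⁅R x, R y⁆ = R (⁅R x, y⁆ + ⁅x, R y⁆ - ⁅R x, R y⁆))
    (ρ : L →ₗ[k] Module.End k V)
    (hρ : ∀ (x y : L) (v : V), ρ ⁅x, y⁆ v = ρ x (ρ y v) - ρ y (ρ x v))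
    (RV : V →ₗ[k] V)
    (hRV : ∀ (x : L) (u : V),
      ρ (R x) (RV u) = RV (ρ (R x) u + ρ x (RV u) - ρ (R x) (RV u))) :
    (∀ p : L × V, IsLinearMap k (sdBracket ρ p)) ∧
    (∀ q : L × V, IsLinearMap k fun p => sdBracket ρ p q) ∧
    (∀ p : L × V, sdBracket ρ p p = 0) ∧
    (∀ p q r : L × V,
      sdBracket ρ (sdBracket ρ p q) r + sdBracket ρ (sdBracket ρ q r) p
        + sdBracket ρ (sdBracket ρ r p) q = 0) ∧
    (∀ p q : L × V,
      sdBracket ρ (sdR R RV p) (sdR R RV q)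
        = sdR R RV (sdBracket ρ (sdR R RV p) q + sdBracket ρ p (sdR R RV q)
            - sdBracket ρ (sdR R RV p) (sdR R RV q))) := by
  have jac : ∀ x y z : L, ⁅⁅x,y⁆,z⁆ + ⁅⁅y,z⁆,x⁆ + ⁅⁅z,x⁆,y⁆ = 0 := by
    intro x y z
    rw [lie_lie, ← lie_skew ⁅y,z⁆ x, ← lie_skew ⁅z,x⁆ y, ← lie_skew z x, lie_neg]
    abel
  refine ⟨?_, ?_, ?_, ?_, ?_⟩
  · intro p
    constructor
    · intro q r
      simp [sdBracket, Prod.ext_iff]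
      abel
    · intro c q
      simp [sdBracket, Prod.ext_iff, smul_sub]
  · intro q
    constructor
    · intro p r
      simp [sdBracket, Prod.ext_iff]
      abel
    · intro c p
      simp [sdBracket, Prod.ext_iff, smul_sub]
  · intro p
    simp [sdBracket, Prod.ext_iff]
  · intro p q r
    simp only [sdBracket, Prod.mk_add_mk, Prod.mk_eq_zero, hρ, map_sub,
      LinearMap.sub_apply]
    refine ⟨jac _ _ _, ?_⟩
    abel
  · intro p q
    simp only [sdBracket, sdR, Prod.fst_add, Prod.snd_add, Prod.fst_sub,
      Prod.snd_sub, Prod.ext_iff]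
    refine ⟨hR _ _, ?_⟩
    conv_lhs => rw [hRV p.1 q.2, hRV q.1 p.2]
    rw [← map_sub]
    congr 1
    abel

end ReynoldsSemidirect
end

section
/- Let (L,[·,·]) be a Lie algebra over a field k and R a Reynolds operator on L that is bijective. Then R⁻¹ − id is a derivation of L (i.e. (R⁻¹ − id)[x,y] = [(R⁻¹ − id)x, y] + [x, (R⁻¹ − id)y] for all x, y ∈ L) and commutes with R, so (L, R, R⁻¹ − id) is a Reynolds LieDer pair. -/
/-- If `R` is a bijective Reynolds operator on a Lie algebra `L` over a field `k`
(realized as a linear equivalence), then `R⁻¹ - id` is a derivation of `L` commuting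
with `R`, so `(L, R, R⁻¹ - id)` is a Reynolds LieDer pair. -/
theorem invertible_reynolds_lieDer {k L : Type*} [Field k] [LieRing L] [LieAlgebra k L]
    (R : L ≃ₗ[k] L)
    (hR : ∀ x y : L, ⁅R x, R y⁆ = R (⁅R x, y⁆ + ⁅x, R y⁆ - ⁅R x, R y⁆)) :
    (∀ x y : L,
      R.symm ⁅x, y⁆ - ⁅x, y⁆ = ⁅R.symm x - x, y⁆ + ⁅x, R.symm y - y⁆) ∧
    (∀ x : L, R (R.symm x - x) = R.symm (R x) - R x) := by
  constructor
  · intro x y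
    have h := hR (R.symm x) (R.symm y)
    simp only [LinearEquiv.apply_symm_apply] at h
    have h2 : R.symm ⁅x, y⁆ = ⁅x, R.symm y⁆ + ⁅R.symm x, y⁆ - ⁅x, y⁆ := by
      have := congrArg R.symm h
      simpa using this
    rw [h2]
    simp only [sub_lie, lie_sub]
    abel
  · intro x
    simp
end

section
/- Let (L,[·,·]_L, R_L) and (G,[·,·]_G, R_G) be Reynolds Lie algebras over a field k and let (L, G, ρ_L, ρ_G) be a matched pair of Lie algebras, so that L ⊕ G with bracket [x+a, y+b] = [x,y]_L + ρ_G(a)y − ρ_G(b)x + [a,b]_G + ρ_L(x)b − ρ_L(y)a is a Lie algebra L ⋈ G. Then the linear map x+a ↦ R_L(x) + R_G(a) is a Reynolds operator on L ⋈ G if and only if (G; ρ_L, R_G) is a representation of the Reynolds Lie algebra (L, R_L) and (L; ρ_G, R_L) is a representation of the Reynolds Lie algebra (G, R_G). -/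
namespace ReynoldsMatchedPair

variable {k L G : Type*} [Field k] [LieRing L] [LieAlgebra k L]
  [LieRing G] [LieAlgebra k G]

/-- The matched-pair bracket on `L × G`:
`[x+a, y+b] = [x,y]_L + ρ_G(a)y - ρ_G(b)x + [a,b]_G + ρ_L(x)b - ρ_L(y)a`. -/
def mpBracket (ρL : L →ₗ[k] Module.End k G) (ρG : G →ₗ[k] Module.End k L)
    (p q : L × G) : L × G :=
  (⁅p.1, q.1⁆ + ρG p.2 q.1 - ρG q.2 p.1, ⁅p.2, q.2⁆ + ρL p.1 q.2 - ρL q.1 p.2)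

/-- The map `x + a ↦ R_L(x) + R_G(a)` on `L × G`. -/
def mpR (RL : L →ₗ[k] L) (RG : G →ₗ[k] G) (p : L × G) : L × G :=
  (RL p.1, RG p.2)

/-- Given Reynolds Lie algebras `(L, R_L)` and `(G, R_G)` and a matched pair of Lie
algebras `(L, G, ρ_L, ρ_G)`, the map `x+a ↦ R_L(x)+R_G(a)` is a Reynolds operator on
`L ⋈ G` if and only if `(G; ρ_L, R_G)` is a representation of `(L, R_L)` and
`(L; ρ_G, R_L)` is a representation of `(G, R_G)`. -/
theorem matchedPair_reynolds_iff
    (RL : L →ₗ[k] L)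
    (hRL : ∀ x y : L, ⁅RL x, RL y⁆ = RL (⁅RL x, y⁆ + ⁅x, RL y⁆ - ⁅RL x, RL y⁆))
    (RG : G →ₗ[k] G)
    (hRG : ∀ a b : G, ⁅RG a, RG b⁆ = RG (⁅RG a, b⁆ + ⁅a, RG b⁆ - ⁅RG a, RG b⁆))
    (ρL : L →ₗ[k] Module.End k G)
    (hρL : ∀ (x y : L) (a : G), ρL ⁅x, y⁆ a = ρL x (ρL y a) - ρL y (ρL x a))
    (ρG : G →ₗ[k] Module.End k L)
    (hρG : ∀ (a b : G) (x : L), ρG ⁅a, b⁆ x = ρG a (ρG b x) - ρG b (ρG a x))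
    (hm1 : ∀ (x : L) (a b : G),
      ρL x ⁅a, b⁆ - ⁅ρL x a, b⁆ - ⁅a, ρL x b⁆ + ρL (ρG a x) b - ρL (ρG b x) a = 0)
    (hm2 : ∀ (a : G) (x y : L),
      ρG a ⁅x, y⁆ - ⁅ρG a x, y⁆ - ⁅x, ρG a y⁆ + ρG (ρL x a) y - ρG (ρL y a) x = 0) :
    (∀ p q : L × G,
        mpBracket ρL ρG (mpR RL RG p) (mpR RL RG q)
          = mpR RL RG (mpBracket ρL ρG (mpR RL RG p) q + mpBracket ρL ρG p (mpR RL RG q)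
              - mpBracket ρL ρG (mpR RL RG p) (mpR RL RG q)))
      ↔ ((∀ (x : L) (a : G),
            ρL (RL x) (RG a) = RG (ρL (RL x) a + ρL x (RG a) - ρL (RL x) (RG a))) ∧
         (∀ (a : G) (x : L),
            ρG (RG a) (RL x) = RL (ρG (RG a) x + ρG a (RL x) - ρG (RG a) (RL x)))) := by
  constructor
  · intro h
    constructor
    · intro x a
      have := h (x, 0) (0, a)
      simp [mpBracket, mpR, Prod.ext_iff] at this
      simpa using this.2
    · intro a x
      have := h (0, a) (x, 0)
      simp [mpBracket, mpR, Prod.ext_iff] at this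
      simpa using this.1
  · rintro ⟨h1, h2⟩ ⟨x, a⟩ ⟨y, b⟩
    have e1 := hRL x y
    have e2 := h2 a y
    have e3 := h2 b x
    have f1 := hRG a b
    have f2 := h1 x b
    have f3 := h1 y a
    simp only [mpBracket, mpR, Prod.ext_iff, Prod.fst_add, Prod.snd_add, Prod.fst_sub,
      Prod.snd_sub]
    constructor
    · conv_lhs => rw [e1, e2, e3]
      rw [← map_add, ← map_sub]
      congr 1
      abel
    · conv_lhs => rw [f1, f2, f3]
      rw [← map_add, ← map_sub]
      congr 1
      abel

end ReynoldsMatchedPair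
end

section
/- Let p : L̂ → L be a surjective Lie algebra morphism over a field k with kernel V such that [u, v]_{L̂} = 0 for all u, v ∈ V, let R̂ be a Reynolds operator on L̂ and R a Reynolds operator on L with p ∘ R̂ = R ∘ p and R̂(V) ⊆ V (write R_V := R̂|_V), let d̂ be a derivation of L̂ and d a derivation of L with p ∘ d̂ = d ∘ p, d̂(V) ⊆ V (write d_V := d̂|_V), R̂ ∘ d̂ = d̂ ∘ R̂ and R ∘ d = d ∘ R, and let s : L → L̂ be a linear section of p (p ∘ s = id). Define ρ(a)u := [s(a), u]_{L̂} for a ∈ L, u ∈ V. Then (V; ρ, R_V, d_V) is a representation of the Reynolds LieDer pair (L, R, d): ρ([a,b]) = ρ(a)∘ρ(b) − ρ(b)∘ρ(a), ρ(Ra)(R_V u) = R_V(ρ(Ra)u + ρ(a)(R_V u) − ρ(Ra)(R_V u)), and d_V(ρ(a)u) = ρ(da)u + ρ(a)(d_V u) for all a, b ∈ L, u ∈ V. -/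
/-- Let `0 → V → L̂ → L → 0` be an abelian extension of Reynolds LieDer pairs
(`V` realized via an injective linear map `i : V → L̂` whose range is `ker p`, with
trivial bracket on `V`), and let `s` be a linear section of `p`. Then
`ρ(a)u := [s(a), i(u)]` (with values in `V`, specified via `i ∘ ρ(a) = [s(a), i ·]`)
makes `(V; ρ, R_V, d_V)` a representation of the Reynolds LieDer pair `(L, R, d)`. -/
theorem abelian_extension_representation
    {k LH L V : Type*} [Field k] [LieRing LH] [LieAlgebra k LH]
    [LieRing L] [LieAlgebra k L] [AddCommGroup V] [Module k V]
    -- the surjective Lie algebra morphism `p` with section `s`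
    (p : LH →ₗ[k] L) (hp : ∀ x y : LH, p ⁅x, y⁆ = ⁅p x, p y⁆)
    (s : L →ₗ[k] LH) (hs : ∀ a : L, p (s a) = a)
    -- `V` as the kernel of `p`
    (i : V →ₗ[k] LH) (hi : Function.Injective i)
    (hpi : ∀ u : V, p (i u) = 0)
    (hexact : ∀ x : LH, p x = 0 → ∃ u : V, i u = x)
    (habelian : ∀ u v : V, ⁅i u, i v⁆ = 0)
    -- the Reynolds operators
    (RH : LH →ₗ[k] LH)
    (hRH : ∀ x y : LH, ⁅RH x, RH y⁆ = RH (⁅RH x, y⁆ + ⁅x, RH y⁆ - ⁅RH x, RH y⁆))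
    (R : L →ₗ[k] L)
    (hR : ∀ x y : L, ⁅R x, R y⁆ = R (⁅R x, y⁆ + ⁅x, R y⁆ - ⁅R x, R y⁆))
    (hpR : ∀ x : LH, p (RH x) = R (p x))
    (RV : V →ₗ[k] V) (hiRV : ∀ u : V, RH (i u) = i (RV u))
    -- the derivations
    (dH : LH →ₗ[k] LH) (hdH : ∀ x y : LH, dH ⁅x, y⁆ = ⁅dH x, y⁆ + ⁅x, dH y⁆)
    (d : L →ₗ[k] L) (hd : ∀ x y : L, d ⁅x, y⁆ = ⁅d x, y⁆ + ⁅x, d y⁆)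
    (hpd : ∀ x : LH, p (dH x) = d (p x))
    (dV : V →ₗ[k] V) (hidV : ∀ u : V, dH (i u) = i (dV u))
    (hRHdH : ∀ x : LH, RH (dH x) = dH (RH x))
    (hRd : ∀ x : L, R (d x) = d (R x))
    -- the induced action `ρ`
    (ρ : L → V → V) (hρdef : ∀ (a : L) (u : V), i (ρ a u) = ⁅s a, i u⁆) :
    (∀ (a b : L) (u : V), ρ ⁅a, b⁆ u = ρ a (ρ b u) - ρ b (ρ a u)) ∧
    (∀ (a : L) (u : V),
      ρ (R a) (RV u) = RV (ρ (R a) u + ρ a (RV u) - ρ (R a) (RV u))) ∧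
    (∀ (a : L) (u : V), dV (ρ a u) = ρ (d a) u + ρ a (dV u)) := by
  -- key lemma: brackets with `i u` only depend on the image under `p`
  have key : ∀ (x y : LH) (u : V), p x = p y → ⁅x, i u⁆ = ⁅y, i u⁆ := by
    intro x y u hxy
    have h0 : p (x - y) = 0 := by rw [map_sub, hxy, sub_self]
    obtain ⟨v, hv⟩ := hexact _ h0
    have : ⁅x - y, i u⁆ = 0 := by rw [← hv, habelian]
    rw [sub_lie] at this
    exact sub_eq_zero.mp this
  refine ⟨?_, ?_, ?_⟩
  · intro a b u
    apply hi
    rw [hρdef, key (s ⁅a, b⁆) ⁅s a, s b⁆ u (by rw [hs, hp, hs, hs]),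
      lie_lie, map_sub, hρdef, hρdef, hρdef, hρdef]
  · intro a u
    apply hi
    have h1 : ⁅RH (s a), i u⁆ = i (ρ (R a) u) := by
      rw [hρdef]; exact key _ _ u (by rw [hpR, hs, hs])
    have h2 : ⁅s a, RH (i u)⁆ = i (ρ a (RV u)) := by rw [hiRV, hρdef]
    have h3 : ⁅RH (s a), RH (i u)⁆ = i (ρ (R a) (RV u)) := by
      rw [hiRV, hρdef]; exact key _ _ (RV u) (by rw [hpR, hs, hs])
    calc i (ρ (R a) (RV u)) = ⁅RH (s a), RH (i u)⁆ := h3.symm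
      _ = RH (⁅RH (s a), i u⁆ + ⁅s a, RH (i u)⁆ - ⁅RH (s a), RH (i u)⁆) := hRH _ _
      _ = i (RV (ρ (R a) u + ρ a (RV u) - ρ (R a) (RV u))) := by
          rw [h1, h2, h3, ← map_add, ← map_sub, hiRV]
  · intro a u
    apply hi
    have h1 : ⁅dH (s a), i u⁆ = i (ρ (d a) u) := by
      rw [hρdef]; exact key _ _ u (by rw [hpd, hs, hs])
    have h2 : ⁅s a, dH (i u)⁆ = i (ρ a (dV u)) := by rw [hidV, hρdef]
    rw [← hidV, hρdef, hdH, h1, h2, ← map_add]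
end

section
/- Let (L,[·,·]) be a Lie algebra over a field k, R a Reynolds operator on L, and V a k-vector space with a linear map R_V : V → V. Let ψ : Λ²L → V be alternating bilinear with ψ([a,b],c) + ψ([b,c],a) + ψ([c,a],b) = 0 for all a,b,c ∈ L, and ξ : L → V linear with ξ(Ra) = R_V(ξ(a)) for all a ∈ L. Let d be a derivation of L with d ∘ R = R ∘ d and d_V : V → V a linear map with d_V ∘ R_V = R_V ∘ d_V. Define Ob²(a,b) := d_V(ψ(a,b)) − ψ(da,b) − ψ(a,db) and Ob¹(a) := d_V(ξ(a)) − ξ(da). Then Ob²([a,b],c) + Ob²([b,c],a) + Ob²([c,a],b) = 0 for all a,b,c ∈ L, and Ob¹(Ra) = R_V(Ob¹(a)) for all a ∈ L; i.e. (Ob², Ob¹) is a 2-cocycle of the Reynolds Lie algebra (L, R) with coefficients in the trivial representation on V. -/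
/-- For a Reynolds Lie algebra `(L, R)`, a `k`-vector space `V` with linear map
`R_V`, a 2-cocycle pair `(ψ, ξ)` with trivial coefficients, and a pair of derivations
`(d_V, d)` (with `d ∘ R = R ∘ d` and `d_V ∘ R_V = R_V ∘ d_V`), the obstruction
cochain `(Ob², Ob¹)`, where `Ob²(a,b) = d_V(ψ(a,b)) - ψ(da,b) - ψ(a,db)` and
`Ob¹(a) = d_V(ξ(a)) - ξ(da)`, is again a 2-cocycle of the Reynolds Lie algebra
`(L, R)` with coefficients in the trivial representation:
`Ob²([a,b],c) + Ob²([b,c],a) + Ob²([c,a],b) = 0` and `Ob¹(Ra) = R_V(Ob¹(a))`. -/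
theorem obstruction_is_two_cocycle
    {k L V : Type*} [Field k] [LieRing L] [LieAlgebra k L]
    [AddCommGroup V] [Module k V]
    (R : L →ₗ[k] L)
    (hR : ∀ x y : L, ⁅R x, R y⁆ = R (⁅R x, y⁆ + ⁅x, R y⁆ - ⁅R x, R y⁆))
    (RV : V →ₗ[k] V)
    (ψ : L →ₗ[k] L →ₗ[k] V) (hψalt : ∀ a : L, ψ a a = 0)
    (hψ : ∀ a b c : L, ψ ⁅a, b⁆ c + ψ ⁅b, c⁆ a + ψ ⁅c, a⁆ b = 0)
    (ξ : L →ₗ[k] V) (hξ : ∀ a : L, ξ (R a) = RV (ξ a))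
    (d : L →ₗ[k] L) (hd : ∀ x y : L, d ⁅x, y⁆ = ⁅d x, y⁆ + ⁅x, d y⁆)
    (hdR : ∀ x : L, d (R x) = R (d x))
    (dV : V →ₗ[k] V) (hdV : ∀ u : V, dV (RV u) = RV (dV u)) :
    (∀ a b c : L,
      (dV (ψ ⁅a, b⁆ c) - ψ (d ⁅a, b⁆) c - ψ ⁅a, b⁆ (d c))
        + (dV (ψ ⁅b, c⁆ a) - ψ (d ⁅b, c⁆) a - ψ ⁅b, c⁆ (d a))
        + (dV (ψ ⁅c, a⁆ b) - ψ (d ⁅c, a⁆) b - ψ ⁅c, a⁆ (d b)) = 0) ∧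
    (∀ a : L, dV (ξ (R a)) - ξ (d (R a)) = RV (dV (ξ a) - ξ (d a))) := by
  constructor
  · intro a b c
    have h0 : dV (ψ ⁅a, b⁆ c) + dV (ψ ⁅b, c⁆ a) + dV (ψ ⁅c, a⁆ b) = 0 := by
      rw [← map_add, ← map_add, hψ, map_zero]
    have h1 := hψ (d a) b c
    have h2 := hψ a (d b) c
    have h3 := hψ a b (d c)
    simp only [hd, map_add, LinearMap.add_apply]
    have : (dV (ψ ⁅a, b⁆ c) - (ψ ⁅d a, b⁆ c + ψ ⁅a, d b⁆ c) - ψ ⁅a, b⁆ (d c))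
        + (dV (ψ ⁅b, c⁆ a) - (ψ ⁅d b, c⁆ a + ψ ⁅b, d c⁆ a) - ψ ⁅b, c⁆ (d a))
        + (dV (ψ ⁅c, a⁆ b) - (ψ ⁅d c, a⁆ b + ψ ⁅c, d a⁆ b) - ψ ⁅c, a⁆ (d b))
        = (dV (ψ ⁅a, b⁆ c) + dV (ψ ⁅b, c⁆ a) + dV (ψ ⁅c, a⁆ b))
          - (ψ ⁅d a, b⁆ c + ψ ⁅b, c⁆ (d a) + ψ ⁅c, d a⁆ b)
          - (ψ ⁅a, d b⁆ c + ψ ⁅d b, c⁆ a + ψ ⁅c, a⁆ (d b))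
          - (ψ ⁅a, b⁆ (d c) + ψ ⁅b, d c⁆ a + ψ ⁅d c, a⁆ b) := by abel
    rw [this, h0, h1, h2, h3]
    abel
  · intro a
    rw [hdR, map_sub, hξ, hdV, ← hξ]
end

section
/- Let p : L̂ → L be a surjective Lie algebra morphism over a field k with kernel V such that [u, w]_{L̂} = 0 for all u ∈ V and w ∈ L̂ (a central extension), let R̂ be a Reynolds operator on L̂ and R a Reynolds operator on L with p ∘ R̂ = R ∘ p and R̂(V) ⊆ V (write R_V := R̂|_V), and let s : L → L̂ be a linear section of p. Define ψ(a,b) := [s(a), s(b)]_{L̂} − s([a,b]) and ξ(a) := R̂(s(a)) − s(R(a)). Let d be a derivation of L with d ∘ R = R ∘ d and d_V : V → V a linear map with d_V ∘ R_V = R_V ∘ d_V. Then the following are equivalent: (i) there exists a derivation d̂ of L̂ with d̂|_V = d_V, p ∘ d̂ = d ∘ p and d̂ ∘ R̂ = R̂ ∘ d̂ (i.e. (d_V, d) is extensible); (ii) there exists a linear map γ : L → V such that d_V(ψ(a,b)) − ψ(da,b) − ψ(a,db) = −γ([a,b]) and d_V(ξ(a)) − ξ(da) = R_V(γ(a)) −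 γ(Ra) for all a, b ∈ L. -/
/-- Let `0 → V → L̂ → L → 0` be a central extension of Reynolds Lie algebras (`V`
realized via an injective linear map `i : V → L̂` whose range is `ker p`, bracketing
trivially with all of `L̂`), with section `s`, and let `ψ(a,b) = [s(a),s(b)] - s([a,b])`
and `ξ(a) = R̂(s(a)) - s(R(a))` (specified through `i`). A pair `(d_V, d)` of
derivations (with `d ∘ R = R ∘ d`, `d_V ∘ R_V = R_V ∘ d_V`) is extensible if and only
if the obstruction `(Ob², Ob¹)` is a coboundary, i.e. there is a linear `γ : L → V`
with `d_V(ψ(a,b)) - ψ(da,b) - ψ(a,db) = -γ([a,b])` and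
`d_V(ξ(a)) - ξ(da) = R_V(γ(a)) - γ(Ra)`. -/
theorem extensible_iff_obstruction_trivial
    {k LH L V : Type*} [Field k] [LieRing LH] [LieAlgebra k LH]
    [LieRing L] [LieAlgebra k L] [AddCommGroup V] [Module k V]
    -- the central extension
    (p : LH →ₗ[k] L) (hp : ∀ x y : LH, p ⁅x, y⁆ = ⁅p x, p y⁆)
    (s : L →ₗ[k] LH) (hs : ∀ a : L, p (s a) = a)
    (i : V →ₗ[k] LH) (hi : Function.Injective i)
    (hpi : ∀ u : V, p (i u) = 0)
    (hexact : ∀ x : LH, p x = 0 → ∃ u : V, i u = x)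
    (hcentral : ∀ (u : V) (w : LH), ⁅i u, w⁆ = 0)
    -- the Reynolds operators
    (RH : LH →ₗ[k] LH)
    (hRH : ∀ x y : LH, ⁅RH x, RH y⁆ = RH (⁅RH x, y⁆ + ⁅x, RH y⁆ - ⁅RH x, RH y⁆))
    (R : L →ₗ[k] L)
    (hR : ∀ x y : L, ⁅R x, R y⁆ = R (⁅R x, y⁆ + ⁅x, R y⁆ - ⁅R x, R y⁆))
    (hpR : ∀ x : LH, p (RH x) = R (p x))
    (RV : V →ₗ[k] V) (hiRV : ∀ u : V, RH (i u) = i (RV u))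
    -- the maps `ψ` and `ξ`
    (ψ : L → L → V) (hψdef : ∀ a b : L, i (ψ a b) = ⁅s a, s b⁆ - s ⁅a, b⁆)
    (ξ : L → V) (hξdef : ∀ a : L, i (ξ a) = RH (s a) - s (R a))
    -- the pair of derivations
    (d : L →ₗ[k] L) (hd : ∀ x y : L, d ⁅x, y⁆ = ⁅d x, y⁆ + ⁅x, d y⁆)
    (hdR : ∀ x : L, d (R x) = R (d x))
    (dV : V →ₗ[k] V) (hdVRV : ∀ u : V, dV (RV u) = RV (dV u)) :
    (∃ dH : LH →ₗ[k] LH,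
      (∀ x y : LH, dH ⁅x, y⁆ = ⁅dH x, y⁆ + ⁅x, dH y⁆) ∧
      (∀ u : V, dH (i u) = i (dV u)) ∧
      (∀ x : LH, p (dH x) = d (p x)) ∧
      (∀ x : LH, dH (RH x) = RH (dH x)))
    ↔
    (∃ γ : L →ₗ[k] V,
      (∀ a b : L, dV (ψ a b) - ψ (d a) b - ψ a (d b) = -(γ ⁅a, b⁆)) ∧
      (∀ a : L, dV (ξ a) - ξ (d a) = RV (γ a) - γ (R a))) := by
  classical
  have hcentral2 : ∀ (w : LH) (u : V), ⁅w, i u⁆ = 0 := fun w u => by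
    rw [← lie_skew, hcentral, neg_zero]
  have hker : ∀ x : LH, p (x - s (p x)) = 0 := fun x => by
    rw [map_sub, hs, sub_self]
  let q : LH → V := fun x => (hexact _ (hker x)).choose
  have hq : ∀ x : LH, i (q x) = x - s (p x) := fun x => (hexact _ (hker x)).choose_spec
  have hiq : ∀ (x : LH) (u : V), i u = x - s (p x) → q x = u := fun x u h => hi (by rw [hq, h])
  let qL : LH →ₗ[k] V :=
    { toFun := q
      map_add' := fun x y => hiq _ _ (by rw [map_add, hq, hq, map_add, map_add]; abel)
      map_smul' := fun c x => by
        refine hiq _ _ ?_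
        rw [map_smul, hq, map_smul, map_smul, smul_sub]
        rfl }
  have hdec : ∀ x : LH, x = s (p x) + i (q x) := fun x => by rw [hq]; abel
  have hbr : ∀ x y : LH, ⁅x, y⁆ = ⁅s (p x), s (p y)⁆ := fun x y => by
    conv_lhs => rw [hdec x, hdec y]
    simp only [add_lie, lie_add, hcentral, hcentral2, add_zero, zero_add]
  have hbr2 : ∀ c e : L, ⁅s c, s e⁆ = s ⁅c, e⁆ + i (ψ c e) := fun c e => by
    rw [hψdef]; abel
  have hRs : ∀ c : L, RH (s c) = s (R c) + i (ξ c) := fun c => by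
    rw [hξdef]; abel
  constructor
  · rintro ⟨dH, h1, h2, h3, h4⟩
    obtain ⟨γ, hγ⟩ : ∃ γ : L →ₗ[k] V, ∀ c : L, i (γ c) = dH (s c) - s (d c) :=
      ⟨qL.comp (dH.comp s), fun c => by
        show i (q (dH (s c))) = _
        rw [hq, h3, hs]⟩
    have e1 : ∀ c : L, dH (s c) = s (d c) + i (γ c) := fun c => by
      rw [hγ c]; abel
    refine ⟨γ, ?_, ?_⟩
    · intro a b
      apply hi
      rw [map_sub, map_sub, map_neg]
      rw [← h2, hψdef, hψdef, hψdef, map_sub, h1, e1 a, e1 b, e1 ⁅a, b⁆]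
      simp only [add_lie, lie_add, hcentral, hcentral2, add_zero, zero_add]
      rw [hd, map_add]
      abel
    · intro a
      apply hi
      rw [map_sub, map_sub, ← h2, hξdef, hξdef, map_sub, h4, e1 a, e1 (R a),
        map_add, hiRV, hdR]
      abel
  · rintro ⟨γ, hγ1, hγ2⟩
    have hγ1' : ∀ a b : L, dV (ψ a b) + γ ⁅a, b⁆ = ψ (d a) b + ψ a (d b) := fun a b => by
      have h := hγ1 a b
      have h2 : dV (ψ a b) + γ ⁅a, b⁆ - (ψ (d a) b + ψ a (d b))
          = dV (ψ a b) - ψ (d a) b - ψ a (d b) - -(γ ⁅a, b⁆) := by abel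
      rw [h, sub_self] at h2
      exact sub_eq_zero.mp h2
    have hγ2' : ∀ a : L, γ (R a) + dV (ξ a) = ξ (d a) + RV (γ a) := fun a => by
      have h := hγ2 a
      have h2 : γ (R a) + dV (ξ a) - (ξ (d a) + RV (γ a))
          = dV (ξ a) - ξ (d a) - (RV (γ a) - γ (R a)) := by abel
      rw [h, sub_self] at h2
      exact sub_eq_zero.mp h2
    set dH : LH →ₗ[k] LH := s ∘ₗ d ∘ₗ p + i ∘ₗ γ ∘ₗ p + i ∘ₗ dV ∘ₗ qL with hdHdef
    have hdH : ∀ x : LH, dH x = s (d (p x)) + i (γ (p x)) + i (dV (q x)) := fun x => rfl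
    have hpdH : ∀ x : LH, p (dH x) = d (p x) := fun x => by
      rw [hdH, map_add, map_add, hpi, hpi, hs, add_zero, add_zero]
    refine ⟨dH, ?_, ?_, hpdH, ?_⟩
    · intro x y
      have hqb : q ⁅x, y⁆ = ψ (p x) (p y) := hiq _ _ (by rw [hψdef, ← hbr, hp])
      have e : ⁅dH x, y⁆ = ⁅s (d (p x)), s (p y)⁆ := by rw [hbr (dH x) y, hpdH]
      have e' : ⁅x, dH y⁆ = ⁅s (p x), s (d (p y))⁆ := by rw [hbr x (dH y), hpdH]
      have key : i (dV (ψ (p x) (p y)))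
          = i (ψ (d (p x)) (p y)) + i (ψ (p x) (d (p y))) - i (γ ⁅p x, p y⁆) := by
        rw [← map_add, ← map_sub]
        congr 1
        rw [← hγ1']
        abel
      rw [e, e', hbr2, hbr2, hdH, hp, hqb, hd, map_add, key]
      abel
    · intro u
      have h2 : q (i u) = u := hiq _ _ (by rw [hpi, map_zero, sub_zero])
      rw [hdH, hpi, h2, map_zero, map_zero, map_zero, map_zero, zero_add, zero_add]
    · intro x
      have hqR : q (RH x) = ξ (p x) + RV (q x) := by
        refine hiq _ _ ?_
        calc i (ξ (p x) + RV (q x))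
            = RH (s (p x)) - s (R (p x)) + i (RV (q x)) := by rw [map_add, hξdef]
          _ = RH (s (p x)) + RH (i (q x)) - s (R (p x)) := by rw [← hiRV]; abel
          _ = RH x - s (p (RH x)) := by rw [← map_add, ← hdec, hpR]
      have key2 : i (dV (ξ (p x)))
          = i (ξ (d (p x))) + i (RV (γ (p x))) - i (γ (R (p x))) := by
        rw [← map_add, ← map_sub]
        congr 1
        rw [← hγ2']
        abel
      rw [hdH (RH x), hpR, hqR, hdR, hdH x]
      simp only [map_add]
      rw [hRs, hiRV, hiRV, hdVRV, key2]
      abel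
end

section
/- Let p : L̂ → L be a surjective Lie algebra morphism over a field k with kernel V such that [u, w]_{L̂} = 0 for all u ∈ V and w ∈ L̂ (a central extension), let R̂ be a Reynolds operator on L̂ and R a Reynolds operator on L with p ∘ R̂ = R ∘ p and R̂(V) ⊆ V (write R_V := R̂|_V), let s : L → L̂ be a linear section of p, and set ψ(a,b) := [s(a), s(b)]_{L̂} − s([a,b]) and ξ(a) := R̂(s(a)) − s(R(a)); assume ψ([a,b],c) + ψ([b,c],a) + ψ([c,a],b) = 0 and ξ(Ra) = R_V(ξ(a)) for all a,b,c ∈ L. Assume that every pair (F, g), where F : Λ²L → V is alternating bilinear with F([a,b],c) + F([b,c],a) + F([c,a],b) = 0 and g : L → V is linear with g(Ra) = R_V(g(a)), admits a linear map γ : L → V with F(a,b) = −γ([a,b]) and g(a) = R_V(γ(a)) − γ(Ra) for all a, b ∈ L (i.e. the second cohomology group H²_R(L;V) with trivial coefficients vanishes). Then every pair (d_V, d), with d a derivation of L satisfying d ∘ R = R ∘ d and d_V : V → V linear satisfying d_V ∘ R_V = R_V ∘ d_V, is extensible: there exists a derivation d̂ of L̂ with d̂|_V = d_V, p ∘ d̂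 = d ∘ p and d̂ ∘ R̂ = R̂ ∘ d̂. -/
/-- Let `0 → V → L̂ → L → 0` be a central extension of Reynolds Lie algebras (`V`
realized via an injective linear map `i : V → L̂` whose range is `ker p`, bracketing
trivially with all of `L̂`), with section `s` and associated 2-cocycle `(ψ, ξ)`.
If the second cohomology group of the Reynolds Lie algebra `(L, R)` with trivial
coefficients in `(V, R_V)` vanishes — i.e. every 2-cocycle `(F, g)` is a coboundary —
then every pair of derivations `(d_V, d)` (with `d ∘ R = R ∘ d` and
`d_V ∘ R_V = R_V ∘ d_V`) is extensible. -/
theorem extensible_of_H2_trivial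
    {k LH L V : Type*} [Field k] [LieRing LH] [LieAlgebra k LH]
    [LieRing L] [LieAlgebra k L] [AddCommGroup V] [Module k V]
    -- the central extension
    (p : LH →ₗ[k] L) (hp : ∀ x y : LH, p ⁅x, y⁆ = ⁅p x, p y⁆)
    (s : L →ₗ[k] LH) (hs : ∀ a : L, p (s a) = a)
    (i : V →ₗ[k] LH) (hi : Function.Injective i)
    (hpi : ∀ u : V, p (i u) = 0)
    (hexact : ∀ x : LH, p x = 0 → ∃ u : V, i u = x)
    (hcentral : ∀ (u : V) (w : LH), ⁅i u, w⁆ = 0)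
    -- the Reynolds operators
    (RH : LH →ₗ[k] LH)
    (hRH : ∀ x y : LH, ⁅RH x, RH y⁆ = RH (⁅RH x, y⁆ + ⁅x, RH y⁆ - ⁅RH x, RH y⁆))
    (R : L →ₗ[k] L)
    (hR : ∀ x y : L, ⁅R x, R y⁆ = R (⁅R x, y⁆ + ⁅x, R y⁆ - ⁅R x, R y⁆))
    (hpR : ∀ x : LH, p (RH x) = R (p x))
    (RV : V →ₗ[k] V) (hiRV : ∀ u : V, RH (i u) = i (RV u))
    -- the maps `ψ` and `ξ` and their cocycle properties
    (ψ : L → L → V) (hψdef : ∀ a b : L, i (ψ a b) = ⁅s a, s b⁆ - s ⁅a, b⁆)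
    (ξ : L → V) (hξdef : ∀ a : L, i (ξ a) = RH (s a) - s (R a))
    (hψcoc : ∀ a b c : L, ψ ⁅a, b⁆ c + ψ ⁅b, c⁆ a + ψ ⁅c, a⁆ b = 0)
    (hξcoc : ∀ a : L, ξ (R a) = RV (ξ a))
    -- vanishing of the second cohomology group `H²_R(L;V)` with trivial coefficients
    (hH2 : ∀ F : L →ₗ[k] L →ₗ[k] V, (∀ a : L, F a a = 0) →
      (∀ a b c : L, F ⁅a, b⁆ c + F ⁅b, c⁆ a + F ⁅c, a⁆ b = 0) →
      ∀ g : L →ₗ[k] V, (∀ a : L, g (R a) = RV (g a)) →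
      ∃ γ : L →ₗ[k] V,
        (∀ a b : L, F a b = -(γ ⁅a, b⁆)) ∧
        (∀ a : L, g a = RV (γ a) - γ (R a))) :
    -- conclusion: every compatible pair of derivations is extensible
    ∀ (d : L →ₗ[k] L), (∀ x y : L, d ⁅x, y⁆ = ⁅d x, y⁆ + ⁅x, d y⁆) →
      (∀ x : L, d (R x) = R (d x)) →
      ∀ (dV : V →ₗ[k] V), (∀ u : V, dV (RV u) = RV (dV u)) →
      ∃ dH : LH →ₗ[k] LH,
        (∀ x y : LH, dH ⁅x, y⁆ = ⁅dH x, y⁆ + ⁅x, dH y⁆) ∧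
        (∀ u : V, dH (i u) = i (dV u)) ∧
        (∀ x : LH, p (dH x) = d (p x)) ∧
        (∀ x : LH, dH (RH x) = RH (dH x)) := by
  
  intro d hd hdR dV hdVRV
  have hcentral' : ∀ (u : V) (w : LH), ⁅w, i u⁆ = 0 := fun u w => by
    rw [← lie_skew, hcentral, neg_zero]
  -- bracket formula
  have hbr : ∀ a b : L, ⁅s a, s b⁆ = s ⁅a, b⁆ + i (ψ a b) := fun a b => by
    rw [hψdef]; abel
  -- the retraction q0
  have hqx : ∀ x : LH, ∃ u : V, i u = x - s (p x) := fun x =>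
    hexact _ (by simp [map_sub, hs])
  choose q0 hq0 using hqx
  have hdecomp : ∀ x : LH, x = s (p x) + i (q0 x) := fun x => by rw [hq0]; abel
  have hqadd : ∀ x y : LH, q0 (x + y) = q0 x + q0 y := fun x y => hi (by
    simp only [hq0, map_add]; abel)
  have hqsmul : ∀ (c : k) (x : LH), q0 (c • x) = c • q0 x := fun c x => hi (by
    simp only [hq0, map_smul, smul_sub])
  have hqs : ∀ a : L, q0 (s a) = 0 := fun a => hi (by
    simp only [hq0, hs, map_zero, sub_self])
  have hqi : ∀ u : V, q0 (i u) = u := fun u => hi (by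
    simp only [hq0, hpi, map_zero, sub_zero])
  -- bilinearity of ψ
  have hψa1 : ∀ a b c : L, ψ (a + b) c = ψ a c + ψ b c := fun a b c => hi (by
    simp only [hψdef, map_add, add_lie]; abel)
  have hψa2 : ∀ a b c : L, ψ a (b + c) = ψ a b + ψ a c := fun a b c => hi (by
    simp only [hψdef, map_add, lie_add]; abel)
  have hψs1 : ∀ (c : k) (a b : L), ψ (c • a) b = c • ψ a b := fun c a b => hi (by
    simp only [hψdef, map_smul, smul_lie, smul_sub])
  have hψs2 : ∀ (c : k) (a b : L), ψ a (c • b) = c • ψ a b := fun c a b => hi (by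
    simp only [hψdef, map_smul, lie_smul, smul_sub])
  have hψalt : ∀ a : L, ψ a a = 0 := fun a => hi (by
    simp only [hψdef, lie_self, map_zero, sub_self])
  -- linearity of ξ
  have hξadd : ∀ a b : L, ξ (a + b) = ξ a + ξ b := fun a b => hi (by
    simp only [hξdef, map_add]; abel)
  have hξsmul : ∀ (c : k) (a : L), ξ (c • a) = c • ξ a := fun c a => hi (by
    simp only [hξdef, map_smul, smul_sub])
  -- the 2-cocycle (F, g) attached to (d, dV)
  set F : L →ₗ[k] L →ₗ[k] V := LinearMap.mk₂ k
    (fun a b => dV (ψ a b) - ψ (d a) b - ψ a (d b))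
    (fun a a' b => by simp only [map_add, hψa1]; abel)
    (fun c a b => by simp only [map_smul, hψs1, smul_sub])
    (fun a b b' => by simp only [map_add, hψa2]; abel)
    (fun c a b => by simp only [map_smul, hψs2, smul_sub]) with hFdef
  have hFalt : ∀ a : L, F a a = 0 := by
    intro a
    have h := hψa1 a a a
    have h' := hψa2 a a a
    simp only [hFdef, LinearMap.mk₂_apply, hψalt, map_zero]
    have hskew : ∀ x y : L, ψ x y = -ψ y x := by
      intro x y
      have h := hψa1 x y (x + y)
      rw [hψa2 x x y, hψa2 y x y, hψalt, hψalt, hψalt] at h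
      have h2 : ψ x y + ψ y x = 0 := by
        rw [← sub_eq_zero]
        calc ψ x y + ψ y x - 0 = 0 + ψ x y + (ψ y x + 0) - 0 := by abel
          _ = 0 - 0 := by rw [← h]
          _ = 0 := by abel
      exact eq_neg_of_add_eq_zero_left h2
    rw [hskew (d a) a]
    abel
  have hFcoc : ∀ a b c : L, F ⁅a, b⁆ c + F ⁅b, c⁆ a + F ⁅c, a⁆ b = 0 := by
    intro a b c
    simp only [hFdef, LinearMap.mk₂_apply]
    have h0 : dV (ψ ⁅a, b⁆ c) + dV (ψ ⁅b, c⁆ a) + dV (ψ ⁅c, a⁆ b) = 0 := by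
      rw [← map_add, ← map_add, hψcoc, map_zero]
    have hsum : (dV (ψ ⁅a, b⁆ c) + dV (ψ ⁅b, c⁆ a) + dV (ψ ⁅c, a⁆ b))
        - (ψ ⁅d a, b⁆ c + ψ ⁅b, c⁆ (d a) + ψ ⁅c, d a⁆ b)
        - (ψ ⁅a, d b⁆ c + ψ ⁅d b, c⁆ a + ψ ⁅c, a⁆ (d b))
        - (ψ ⁅a, b⁆ (d c) + ψ ⁅b, d c⁆ a + ψ ⁅d c, a⁆ b) = 0 := by
      rw [h0, hψcoc (d a) b c, hψcoc a (d b) c, hψcoc a b (d c)]; abel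
    rw [hd a b, hd b c, hd c a, hψa1, hψa1, hψa1]
    rw [← sub_eq_zero, sub_zero] at hsum ⊢
    rw [← hsum]; abel
  set g : L →ₗ[k] V :=
    { toFun := fun a => dV (ξ a) - ξ (d a)
      map_add' := fun a b => by simp only [map_add, hξadd]; abel
      map_smul' := fun c a => by
        simp only [map_smul, hξsmul, smul_sub, RingHom.id_apply] } with hgdef
  have hgcoc : ∀ a : L, g (R a) = RV (g a) := by
    intro a
    simp only [hgdef, LinearMap.coe_mk, AddHom.coe_mk]
    rw [hξcoc, hdR, hξcoc, hdVRV, map_sub]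
  obtain ⟨γ, hγ1, hγ2⟩ := hH2 F hFalt hFcoc g hgcoc
  -- the lifted derivation
  set q : LH →ₗ[k] V :=
    { toFun := q0
      map_add' := hqadd
      map_smul' := fun c x => by simp only [hqsmul, RingHom.id_apply] } with hqdef
  refine ⟨s ∘ₗ (d ∘ₗ p) + i ∘ₗ (dV ∘ₗ q + γ ∘ₗ p), ?_, ?_, ?_, ?_⟩
  · -- derivation property
    intro x y
    have hdH : ∀ z : LH,
        (s ∘ₗ (d ∘ₗ p) + i ∘ₗ (dV ∘ₗ q + γ ∘ₗ p)) z
          = s (d (p z)) + i (dV (q0 z) + γ (p z)) := fun z => rfl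
    have hpdH : ∀ z : LH, p ((s ∘ₗ (d ∘ₗ p) + i ∘ₗ (dV ∘ₗ q + γ ∘ₗ p)) z)
        = d (p z) := fun z => by
      rw [hdH]; simp [hs, hpi]
    have hbrxy : ∀ z w : LH, ⁅z, w⁆ = ⁅s (p z), s (p w)⁆ := by
      intro z w
      conv_lhs => rw [hdecomp z, hdecomp w]
      simp [lie_add, add_lie, hcentral, hcentral']
    have hqlie : ∀ z w : LH, q0 ⁅z, w⁆ = ψ (p z) (p w) := fun z w => by
      apply hi
      rw [hq0, hp, hbrxy z w, hbr]; abel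
    rw [hbrxy ((s ∘ₗ (d ∘ₗ p) + i ∘ₗ (dV ∘ₗ q + γ ∘ₗ p)) x) y,
        hbrxy x ((s ∘ₗ (d ∘ₗ p) + i ∘ₗ (dV ∘ₗ q + γ ∘ₗ p)) y),
        hpdH x, hpdH y, hbr, hbr, hdH, hp, hqlie, hd]
    have hF := hγ1 (p x) (p y)
    simp only [hFdef, LinearMap.mk₂_apply] at hF
    have key : dV (ψ (p x) (p y)) + γ ⁅p x, p y⁆
        = ψ (d (p x)) (p y) + ψ (p x) (d (p y)) := by
      rw [← sub_eq_zero] at hF ⊢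
      rw [sub_neg_eq_add] at hF
      rw [← hF]; abel
    rw [map_add s, key, map_add i]
    abel
  · -- restriction to V
    intro u
    show s (d (p (i u))) + i (dV (q0 (i u)) + γ (p (i u))) = i (dV u)
    rw [hpi, hqi, map_zero, map_zero, map_zero, add_zero, zero_add]
  · -- compatibility with p
    intro x
    show p (s (d (p x)) + i (dV (q0 x) + γ (p x))) = d (p x)
    simp [hs, hpi]
  · -- commutation with the Reynolds operators
    intro x
    have hqRH : q0 (RH x) = ξ (p x) + RV (q0 x) := by
      apply hi
      rw [hq0, hpR, map_add, hξdef, ← hiRV]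
      have hRHx : RH (s (p x)) + RH (i (q0 x)) = RH x := by
        rw [← map_add, ← hdecomp]
      rw [← hRHx]; abel
    show s (d (p (RH x))) + i (dV (q0 (RH x)) + γ (p (RH x)))
        = RH (s (d (p x)) + i (dV (q0 x) + γ (p x)))
    rw [hpR, hqRH, map_add (RH), hiRV]
    have hRHs : RH (s (d (p x))) = s (R (d (p x))) + i (ξ (d (p x))) := by
      rw [hξdef]; abel
    rw [hRHs, ← hdR]
    have hg := hγ2 (p x)
    simp only [hgdef, LinearMap.coe_mk, AddHom.coe_mk] at hg
    have key : dV (ξ (p x)) + γ (R (p x)) = ξ (d (p x)) + RV (γ (p x)) := by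
      rw [← sub_eq_zero] at hg ⊢
      rw [← hg]; abel
    rw [map_add dV, hdVRV, map_add RV, map_add i, map_add i, map_add i]
    rw [show dV (ξ (p x)) = ξ (d (p x)) + RV (γ (p x)) - γ (R (p x)) by
      rw [← key]; abel]
    rw [map_sub, map_add]
    abel
end
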